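/- (Exponentiated gradient regret bound.) Let z_1,…,z_T ∈ ℝ^m and η > 0 satisfy η z_{t,i} ≥ −1 for all t, i. Define q̃_1 = (1,…,1), q̃_{t+1,i} = q̃_{t,i} exp(−η z_{t,i}), and q_t = q̃_t / (Σ_i q̃_{t,i}). Then for every u in the probability simplex S_m: Σ_{t=1}^T ⟨q_t − u, z_t⟩ ≤ log(m)/η + η Σ_{t=1}^T Σ_{i=1}^m q_{t,i} z_{t,i}². -/
import Mathlib
open Finset

lemma exp_quad {x : ℝ} (hx : x ≤ 1) : Real.exp x ≤ 1 + x + x ^ 2 := by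
  rcases le_or_gt (-1) x with h | h
  · have hb := Real.exp_bound (x := x) (by rw [abs_le]; exact ⟨h, hx⟩) (n := 2) (by norm_num)
    simp [Finset.sum_range_succ] at hb
    have h2 := abs_le.mp hb
    nlinarith [sq_abs x, h2.2]
  · have h1 : Real.exp x < 1 := Real.exp_lt_one_iff.mpr (by linarith)
    nlinarith

/-- Regret bound of the exponentiated gradient (multiplicative weights)
algorithm with local-norm variance term. -/
theorem stmt7 {m T : ℕ} (hm : 2 ≤ m) (z : ℕ → Fin m → ℝ) (η : ℝ) (hη : 0 < η)
    (hz : ∀ t i, -1 ≤ η * z t i)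
    (qt : ℕ → Fin m → ℝ) (hq1 : ∀ i, qt 0 i = 1)
    (hqrec : ∀ t i, qt (t + 1) i = qt t i * Real.exp (-η * z t i))
    (q : ℕ → Fin m → ℝ) (hq : ∀ t i, q t i = qt t i / ∑ j, qt t j)
    (u : Fin m → ℝ) (hu0 : ∀ i, 0 ≤ u i) (hu1 : ∑ i, u i = 1) :
    ∑ t ∈ Finset.range T, ∑ i, (q t i - u i) * z t i ≤
      Real.log m / η + η * ∑ t ∈ Finset.range T, ∑ i, q t i * z t i ^ 2 := by
  have hmpos : 0 < m := by omega
  haveI : Nonempty (Fin m) := ⟨⟨0, hmpos⟩⟩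
  have hqt : ∀ t i, qt t i = Real.exp (-(η * ∑ s ∈ Finset.range t, z s i)) := by
    intro t i
    induction t with
    | zero => simp [hq1]
    | succ n ih =>
      rw [hqrec, ih, ← Real.exp_add, Finset.sum_range_succ]
      ring_nf
  have hqtpos : ∀ t i, 0 < qt t i := fun t i => by rw [hqt]; exact Real.exp_pos _
  have hW : ∀ t, 0 < ∑ j, qt t j := fun t =>
    Finset.sum_pos (fun i _ => (hqtpos t i)) univ_nonempty
  have key : ∀ t, Real.log (∑ i, qt (t + 1) i) ≤ Real.log (∑ i, qt t i) +
      (-(η * ∑ i, q t i * z t i) + η ^ 2 * ∑ i, q t i * z t i ^ 2) := by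
    intro t
    set W := ∑ j, qt t j with hWdef
    set x : ℝ := -(η * ∑ i, q t i * z t i) + η ^ 2 * ∑ i, q t i * z t i ^ 2 with hxdef
    have hstep : ∑ i, qt (t + 1) i ≤ W * (1 + x) := by
      have h1 : ∀ i, qt (t + 1) i ≤ qt t i * (1 + (-η * z t i) + (-η * z t i) ^ 2) := by
        intro i
        rw [hqrec]
        exact mul_le_mul_of_nonneg_left (exp_quad (by nlinarith [hz t i])) (hqtpos t i).le
      calc ∑ i, qt (t + 1) i ≤ ∑ i, qt t i * (1 + (-η * z t i) + (-η * z t i) ^ 2) :=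
            Finset.sum_le_sum fun i _ => h1 i
        _ = W * (1 + x) := by
            have hqw : ∀ i, qt t i = q t i * W := by
              intro i; rw [hq, hWdef, div_mul_cancel₀ _ (hW t).ne']
            have hsq : ∑ i, q t i = 1 := by
              simp_rw [hq, ← Finset.sum_div]
              exact div_self (hW t).ne'
            simp_rw [hqw]
            have hexp : ∑ i, q t i * W * (1 + -η * z t i + (-η * z t i) ^ 2) =
                ∑ i, (W * q t i + (-η * W) * (q t i * z t i) +
                  (η ^ 2 * W) * (q t i * z t i ^ 2)) :=
              Finset.sum_congr rfl fun i _ => by ring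
            rw [hexp, Finset.sum_add_distrib, Finset.sum_add_distrib,
              ← Finset.mul_sum, ← Finset.mul_sum, ← Finset.mul_sum, hsq, hxdef]
            ring
    have hpos : 0 < ∑ i, qt (t + 1) i := hW (t + 1)
    have h1x : 0 < 1 + x := by
      by_contra hc
      push_neg at hc
      nlinarith [hW t]
    calc Real.log (∑ i, qt (t + 1) i) ≤ Real.log (W * (1 + x)) :=
          Real.log_le_log hpos hstep
      _ = Real.log W + Real.log (1 + x) := Real.log_mul (hW t).ne' h1x.ne'
      _ ≤ Real.log W + x := by linarith [Real.log_le_sub_one_of_pos h1x]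
  have upper : Real.log (∑ i, qt T i) ≤ Real.log m +
      ∑ t ∈ Finset.range T, (-(η * ∑ i, q t i * z t i) + η ^ 2 * ∑ i, q t i * z t i ^ 2) := by
    induction T with
    | zero => simp [hq1]
    | succ n ih =>
      rw [Finset.sum_range_succ]
      linarith [key n, ih]
  have lower : -(η * ∑ t ∈ Finset.range T, ∑ i, u i * z t i) ≤ Real.log (∑ i, qt T i) := by
    have h1 : ∀ i, Real.log (qt T i) ≤ Real.log (∑ j, qt T j) := by
      intro i
      apply Real.log_le_log (hqtpos T i)
      exact Finset.single_le_sum (fun j _ => (hqtpos T j).le) (mem_univ i)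
    calc -(η * ∑ t ∈ Finset.range T, ∑ i, u i * z t i)
        = ∑ i, u i * Real.log (qt T i) := by
          simp_rw [hqt, Real.log_exp]
          rw [Finset.sum_comm, Finset.mul_sum, ← Finset.sum_neg_distrib]
          refine Finset.sum_congr rfl fun i _ => ?_
          rw [← Finset.mul_sum]
          ring
      _ ≤ ∑ i, u i * Real.log (∑ j, qt T j) :=
          Finset.sum_le_sum fun i _ => mul_le_mul_of_nonneg_left (h1 i) (hu0 i)
      _ = Real.log (∑ j, qt T j) := by rw [← Finset.sum_mul, hu1, one_mul]
  have comb : η * (∑ t ∈ Finset.range T, ∑ i, (q t i - u i) * z t i) ≤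
      Real.log m + η ^ 2 * ∑ t ∈ Finset.range T, ∑ i, q t i * z t i ^ 2 := by
    have e1 : ∑ t ∈ Finset.range T, ∑ i, (q t i - u i) * z t i =
        (∑ t ∈ Finset.range T, ∑ i, q t i * z t i) -
        (∑ t ∈ Finset.range T, ∑ i, u i * z t i) := by
      rw [← Finset.sum_sub_distrib]
      refine Finset.sum_congr rfl fun t _ => ?_
      rw [← Finset.sum_sub_distrib]
      exact Finset.sum_congr rfl fun i _ => by ring
    rw [e1]
    have e2 : ∑ t ∈ Finset.range T, (-(η * ∑ i, q t i * z t i) + η ^ 2 * ∑ i, q t i * z t i ^ 2)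
        = -(η * ∑ t ∈ Finset.range T, ∑ i, q t i * z t i) +
          η ^ 2 * ∑ t ∈ Finset.range T, ∑ i, q t i * z t i ^ 2 := by
      rw [Finset.sum_add_distrib, Finset.sum_neg_distrib, ← Finset.mul_sum, ← Finset.mul_sum]
    rw [e2] at upper
    nlinarith [le_trans lower upper]
  have e3 : Real.log m / η + η * ∑ t ∈ Finset.range T, ∑ i, q t i * z t i ^ 2 =
      (Real.log m + η ^ 2 * ∑ t ∈ Finset.range T, ∑ i, q t i * z t i ^ 2) / η := by
    field_simp
  rw [e3, le_div_iff₀ hη, mul_comm]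
  exact comb
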